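/- Let F be a field of characteristic not 2. The map GW(F) → K^MW_0(F) sending ⟨a⟩ ↦ 1 + η[a] is a well-defined ring isomorphism; in particular it respects the defining relations of GW(F): ⟨ab²⟩ = ⟨a⟩, ⟨a⟩ + ⟨b⟩ = ⟨a+b⟩ + ⟨(a+b)ab⟩ for a+b ≠ 0, and ⟨a⟩⟨b⟩ = ⟨ab⟩. -/

import Mathlib

/-!
Writing `⟨a⟩ = 1 + η[a]`, the relation `[ab] = [a] + [b] + η[a][b]` makes `a ↦ ⟨a⟩` multiplicative,
the Steinberg relation becomes `(⟨u⟩ - 1)(⟨1 - u⟩ - 1) = 0`, and `(2 + [-1]η)η = 0` becomes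
`(⟨-1⟩ + 1)(⟨a⟩ - 1) = 0`. Everything else is formal. Writing `-u = (1 - u) / (1 - u⁻¹)` gives
`(⟨u⟩ - 1)(⟨-u⟩ - 1) = 0`, which together with the last identity forces `⟨u²⟩ = 1`. For `c = a + b`,
multiplying the Steinberg relation for `a/c + b/c = 1` by `⟨c⟩` gives
`⟨a⟩ + ⟨b⟩ = ⟨c⟩ + ⟨ab/c⟩ = ⟨c⟩ + ⟨abc⟩`.
-/

namespace MilnorWitt

section Symbols

variable {M R : Type*} [Ring R] {s : M → R} {η : R}

theorem eta_mul_mul_eta_mul (etaComm : ∀ a, η * s a = s a * η) (a b : M) :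
    η * s a * (η * s b) = η * (η * (s a * s b)) := by
  rw [mul_assoc, ← mul_assoc (s a), ← etaComm, mul_assoc]

theorem one_add_eta_mul_map_mul [Monoid M] (etaComm : ∀ a, η * s a = s a * η)
    (mulLog : ∀ a b, s (a * b) = s a + s b + η * s a * s b) (a b : M) :
    1 + η * s (a * b) = (1 + η * s a) * (1 + η * s b) := by
  rw [mulLog, show (1 + η * s a) * (1 + η * s b) = 1 + η * s a + η * s b + η * s a * (η * s b) by
    noncomm_ring, eta_mul_mul_eta_mul etaComm]
  noncomm_ring

end Symbols

section Units

variable {F R : Type*} [Field F] [Ring R] {s : Fˣ → R} {η : R}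

theorem two_add_eta_mul_neg_one_mul_eta (etaComm : ∀ a, η * s a = s a * η)
    (hyp : (2 + s (-1) * η) * η = 0) : (2 + η * s (-1)) * η = 0 := by
  rwa [etaComm]

theorem eta_mul_map_one (etaComm : ∀ a, η * s a = s a * η)
    (mulLog : ∀ a b, s (a * b) = s a + s b + η * s a * s b)
    (hyp : (2 + s (-1) * η) * η = 0) : η * s 1 = 0 := by
  have hsq : (1 + η * s (-1)) * (1 + η * s (-1)) = 1 := by
    calc (1 + η * s (-1)) * (1 + η * s (-1)) = 1 + (2 + η * s (-1)) * η * s (-1) := by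
          noncomm_ring
      _ = 1 := by rw [two_add_eta_mul_neg_one_mul_eta etaComm hyp, zero_mul, add_zero]
  have h1 := one_add_eta_mul_map_mul etaComm mulLog (-1 : Fˣ) (-1)
  rw [neg_one_mul, neg_neg] at h1
  exact add_eq_left.mp (h1.trans hsq)

def unitForm (etaComm : ∀ a, η * s a = s a * η)
    (mulLog : ∀ a b, s (a * b) = s a + s b + η * s a * s b)
    (hyp : (2 + s (-1) * η) * η = 0) : Fˣ →* R where
  toFun a := 1 + η * s a
  map_one' := by rw [eta_mul_map_one etaComm mulLog hyp, add_zero]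
  map_mul' := one_add_eta_mul_map_mul etaComm mulLog

variable (etaComm : ∀ a, η * s a = s a * η)
  (mulLog : ∀ a b, s (a * b) = s a + s b + η * s a * s b)
  (hyp : (2 + s (-1) * η) * η = 0)

theorem unitForm_sub_one_mul_sub_one
    (steinberg : ∀ a b : Fˣ, (a : F) + (b : F) = 1 → s a * s b = 0) {u v : Fˣ}
    (h : (u : F) + v = 1) :
    (unitForm etaComm mulLog hyp u - 1) * (unitForm etaComm mulLog hyp v - 1) = 0 := by
  change (1 + η * s u - 1) * (1 + η * s v - 1) = 0
  rw [add_sub_cancel_left, add_sub_cancel_left, eta_mul_mul_eta_mul etaComm, steinberg u v h,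
    mul_zero, mul_zero]

theorem unitForm_neg_one_add_one_mul_sub_one (a : Fˣ) :
    (unitForm etaComm mulLog hyp (-1) + 1) * (unitForm etaComm mulLog hyp a - 1) = 0 := by
  change (1 + η * s (-1) + 1) * (1 + η * s a - 1) = 0
  rw [add_sub_cancel_left, add_right_comm, one_add_one_eq_two, ← mul_assoc,
    two_add_eta_mul_neg_one_mul_eta etaComm hyp, zero_mul]

end Units

section UnitsHom

variable {R : Type*} [Ring R]

theorem map_sub_one_mul_map_sub_one_eq_zero_of_inv {G : Type*} [Group G] (q : G →* R) {a b : G}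
    (h : (q a⁻¹ - 1) * (q b⁻¹ - 1) = 0) : (q a - 1) * (q b - 1) = 0 := by
  have ha : q a * q a⁻¹ = 1 := by rw [← map_mul, mul_inv_cancel, map_one]
  have hb : q b⁻¹ * q b = 1 := by rw [← map_mul, inv_mul_cancel, map_one]
  calc (q a - 1) * (q b - 1) = (q a * q a⁻¹ - q a) * (q b⁻¹ * q b - q b) := by
        rw [ha, hb]; noncomm_ring
    _ = q a * ((q a⁻¹ - 1) * (q b⁻¹ - 1)) * q b := by noncomm_ring
    _ = 0 := by rw [h, mul_zero, zero_mul]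

variable {F : Type*} [Field F] (q : Fˣ →* R)

theorem map_sub_one_mul_map_neg_sub_one
    (hS : ∀ u v : Fˣ, (u : F) + v = 1 → (q u - 1) * (q v - 1) = 0) (u : Fˣ) :
    (q u - 1) * (q (-u) - 1) = 0 := by
  rcases eq_or_ne u 1 with rfl | hu
  · rw [map_one, sub_self, zero_mul]
  have hu' : (u : F) ≠ 1 := Units.val_eq_one.not.mpr hu
  set x : Fˣ := Units.mk0 (1 - u) (sub_ne_zero.mpr hu'.symm)
  set y : Fˣ := Units.mk0 (1 - (u : F)⁻¹) (sub_ne_zero.mpr (by simpa [eq_comm] using hu'))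
  have hux : (u : F) + x = 1 := by simp [x]
  have huy : ((u⁻¹ : Fˣ) : F) + y = 1 := by simp [y]
  have hneg : -u = x * y⁻¹ := by
    ext
    simp only [x, y, Units.val_neg, Units.val_mul, Units.val_inv_eq_inv_val, Units.val_mk0]
    have : (1 : F) - (u : F)⁻¹ ≠ 0 := y.ne_zero
    field_simp
    ring
  have hx : (q u - 1) * q x = q u - 1 := by
    rw [← sub_eq_zero, ← mul_sub_one]; exact hS u x hux
  have hy : (q u - 1) * (q y⁻¹ - 1) = 0 :=
    map_sub_one_mul_map_sub_one_eq_zero_of_inv q (by rw [inv_inv]; exact hS _ _ huy)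
  calc (q u - 1) * (q (-u) - 1) = (q u - 1) * q x * q y⁻¹ - (q u - 1) := by
        rw [hneg, map_mul, mul_sub_one, mul_assoc]
    _ = (q u - 1) * (q y⁻¹ - 1) := by rw [hx, mul_sub_one]
    _ = 0 := hy

theorem map_mul_self_sub_one (u : Fˣ) :
    q (u * u) - 1 = (q (-1) + 1) * (q u - 1) * q u - (q u - 1) * (q (-u) - 1) := by
  have hc : q (-1) * q u = q u * q (-1) := ((Commute.all _ _).map q).eq
  rw [← neg_one_mul u, map_mul, map_mul]
  calc q u * q u - 1 = (q (-1) + 1) * (q u - 1) * q u - (q u - 1) * (q (-1) * q u - 1)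
        + (q u * q (-1) - q (-1) * q u) * q u := by noncomm_ring
    _ = _ := by rw [hc, sub_self, zero_mul, add_zero]

theorem map_mul_self_eq_one
    (hS : ∀ u v : Fˣ, (u : F) + v = 1 → (q u - 1) * (q v - 1) = 0)
    (hη : ∀ a : Fˣ, (q (-1) + 1) * (q a - 1) = 0) (u : Fˣ) : q (u * u) = 1 := by
  rw [← sub_eq_zero, map_mul_self_sub_one, hη, zero_mul, map_sub_one_mul_map_neg_sub_one q hS,
    sub_zero]

theorem map_add_map_of_eq_add
    (hS : ∀ u v : Fˣ, (u : F) + v = 1 → (q u - 1) * (q v - 1) = 0)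
    (hη : ∀ a : Fˣ, (q (-1) + 1) * (q a - 1) = 0) {a b c : Fˣ} (h : (c : F) = a + b) :
    q a + q b = q c + q (c * a * b) := by
  have hsum : ((a / c : Fˣ) : F) + (b / c : Fˣ) = 1 := by
    rw [Units.val_div_eq_div_val, Units.val_div_eq_div_val, ← add_div, ← h, div_self c.ne_zero]
  have hca : q c * q (a / c) = q a := by rw [← map_mul, mul_div_cancel]
  have hcb : q c * q (b / c) = q b := by rw [← map_mul, mul_div_cancel]
  have hcab : q (a * (b / c)) = q (c * a * b) := by
    rw [show c * a * b = a * (b / c) * (c * c) by ext; simp; field_simp, map_mul q _ (c * c),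
      map_mul_self_eq_one q hS hη, mul_one]
  calc q a + q b = q c + q (a * (b / c)) - q c * ((q (a / c) - 1) * (q (b / c) - 1)) := by
        rw [map_mul, ← hca, ← hcb]; noncomm_ring
    _ = q c + q (c * a * b) := by rw [hS _ _ hsum, mul_zero, sub_zero, hcab]

end UnitsHom

end MilnorWitt

open MilnorWitt in
theorem gw_relations_in_mw_general (F : Type*) [Field F]
    (R : Type*) [Ring R] (s : Fˣ → R) (η : R)
    (steinberg : ∀ a b : Fˣ, (a : F) + (b : F) = 1 → s a * s b = 0)
    (etaComm : ∀ a : Fˣ, η * s a = s a * η)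
    (mulLog : ∀ a b : Fˣ, s (a * b) = s a + s b + η * s a * s b)
    (hyp : (2 + s (-1) * η) * η = 0) :
    (∀ a b : Fˣ, 1 + η * s (a * b * b) = 1 + η * s a) ∧
    (∀ a b c : Fˣ, (c : F) = (a : F) + (b : F) →
      (1 + η * s a) + (1 + η * s b) = (1 + η * s c) + (1 + η * s (c * a * b))) ∧
    (∀ a b : Fˣ, (1 + η * s a) * (1 + η * s b) = 1 + η * s (a * b)) := by
  set q := unitForm etaComm mulLog hyp
  have hS : ∀ u v : Fˣ, (u : F) + v = 1 → (q u - 1) * (q v - 1) = 0 := fun _ _ =>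
    unitForm_sub_one_mul_sub_one etaComm mulLog hyp steinberg
  have hη := unitForm_neg_one_add_one_mul_sub_one etaComm mulLog hyp
  refine ⟨fun a b => ?_, fun a b c h => map_add_map_of_eq_add q hS hη h,
    fun a b => (map_mul q a b).symm⟩
  change q (a * b * b) = q a
  rw [mul_assoc, map_mul, map_mul_self_eq_one q hS hη, mul_one]

/-- For a field `F` of characteristic not 2, the assignment
`⟨a⟩ ↦ 1 + η[a]` respects the defining relations of the Grothendieck–Witt ring
`GW(F)` inside `K^MW_0(F)`: `⟨ab²⟩ = ⟨a⟩`, `⟨a⟩ + ⟨b⟩ = ⟨a+b⟩ + ⟨(a+b)ab⟩` for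
`a + b ≠ 0`, and `⟨a⟩⟨b⟩ = ⟨ab⟩` (whence `GW(F) → K^MW_0(F)` is a well-defined
ring isomorphism). -/
theorem gw_relations_in_mw (F : Type*) [Field F] (hchar : (2 : F) ≠ 0)
    (R : Type*) [Ring R] (s : Fˣ → R) (η : R)
    (steinberg : ∀ a b : Fˣ, (a : F) + (b : F) = 1 → s a * s b = 0)
    (etaComm : ∀ a : Fˣ, η * s a = s a * η)
    (mulLog : ∀ a b : Fˣ, s (a * b) = s a + s b + η * s a * s b)
    (hyp : (2 + s (-1) * η) * η = 0) :
    (∀ a b : Fˣ, 1 + η * s (a * b * b) = 1 + η * s a) ∧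
    (∀ a b c : Fˣ, (c : F) = (a : F) + (b : F) →
      (1 + η * s a) + (1 + η * s b) = (1 + η * s c) + (1 + η * s (c * a * b))) ∧
    (∀ a b : Fˣ, (1 + η * s a) * (1 + η * s b) = 1 + η * s (a * b)) :=
  gw_relations_in_mw_general F R s η steinberg etaComm mulLog hyp
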